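/- Let A = (A,·,∘) be a skew brace and suppose a ∈ A is u-distributive, i.e., (b·c) ∘ a = (b∘a) · a⁻¹ · (c∘a) holds for all b,c ∈ A, and suppose a is not in the center of the group (A,∘). Then the map ι_a : A → A, ι_a(b) = ā ∘ b ∘ a, is a non-identity element of Aut(A); in particular Aut(A) is non-trivial. -/

import Mathlib

/-- A skew brace structure on a group `A` (whose given group operation `*` plays the
role of the "additive" operation `·`): a second group operation `circ` with the same
identity element `1`, satisfying the brace relation
`a ∘ (b · c) = (a ∘ b) · a⁻¹ · (a ∘ c)`. -/
structure SkewBraceStruct (A : Type*) [Group A] where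
  circ : A → A → A
  circInv : A → A
  circ_assoc : ∀ a b c, circ (circ a b) c = circ a (circ b c)
  one_circ : ∀ a, circ 1 a = a
  circ_one : ∀ a, circ a 1 = a
  circInv_circ : ∀ a, circ (circInv a) a = 1
  brace : ∀ a b c, circ a (b * c) = circ a b * a⁻¹ * circ a c

/-- `f` is an automorphism of the skew brace: a bijection that is an automorphism of
both `(A, ·)` and `(A, ∘)`. -/
def SkewBraceStruct.IsAut {A : Type*} [Group A] (S : SkewBraceStruct A) (f : A → A) : Prop :=
  Function.Bijective f ∧ (∀ a b, f (a * b) = f a * f b) ∧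
    (∀ a b, f (S.circ a b) = S.circ (f a) (f b))

/-!
Conjugation `ι_a : b ↦ ā ∘ b ∘ a` is an automorphism of `(A, ∘)` for every `a`, and it is the
identity exactly when `a` is central in `(A, ∘)`. It also respects `·` when `a` is
u-distributive: expanding `ā ∘ (b · c)` by the brace relation and then pulling `∘ a` through
both products by u-distributivity leaves the middle factor `a⁻¹ · ((ā)⁻¹ ∘ a) · a⁻¹`, and
u-distributivity at `b = (ā)⁻¹`, `c = ā` gives `(ā)⁻¹ ∘ a = a · a`, so that factor is `1`.
-/

namespace SkewBraceStruct

variable {A : Type*} [Group A] (S : SkewBraceStruct A)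

def IsUDistributive (a : A) : Prop :=
  ∀ b c : A, S.circ (b * c) a = S.circ b a * a⁻¹ * S.circ c a

def innerAut (a : A) : A → A := fun b => S.circ (S.circ (S.circInv a) b) a

theorem circInv_circInv (a : A) : S.circInv (S.circInv a) = a := by
  have h := S.circ_assoc (S.circInv (S.circInv a)) (S.circInv a) a
  rwa [circInv_circ, circInv_circ, one_circ, circ_one, eq_comm] at h

theorem circ_circInv (a : A) : S.circ a (S.circInv a) = 1 := by
  simpa only [circInv_circInv] using S.circInv_circ (S.circInv a)

theorem circ_circInv_circ (a b : A) : S.circ a (S.circ (S.circInv a) b) = b := by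
  rw [← circ_assoc, circ_circInv, one_circ]

theorem circInv_circ_circ (a b : A) : S.circ (S.circInv a) (S.circ a b) = b := by
  rw [← circ_assoc, circInv_circ, one_circ]

theorem innerAut_circ (a b c : A) :
    S.innerAut a (S.circ b c) = S.circ (S.innerAut a b) (S.innerAut a c) := by
  simp only [innerAut, circ_assoc, circ_circInv_circ]

theorem innerAut_bijective (a : A) : Function.Bijective (S.innerAut a) := by
  refine Function.bijective_iff_has_inverse.mpr
    ⟨fun b => S.circ (S.circ a b) (S.circInv a), fun b => ?_, fun b => ?_⟩ <;>
  simp only [innerAut, circ_assoc, circ_circInv, circInv_circ, circ_circInv_circ,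
    circInv_circ_circ, circ_one]

theorem innerAut_eq_id_iff (a : A) : S.innerAut a = id ↔ ∀ b, S.circ a b = S.circ b a := by
  refine ⟨fun h b => ?_, fun h => funext fun b => ?_⟩
  · have hb := congrArg (S.circ a) (congrFun h b)
    rwa [innerAut, ← circ_assoc, circ_circInv_circ, id, eq_comm] at hb
  · rw [innerAut, circ_assoc, ← h, circInv_circ_circ, id]

variable {S}

theorem IsUDistributive.inv_circInv_circ {a : A} (hu : S.IsUDistributive a) :
    S.circ (S.circInv a)⁻¹ a = a * a := by
  have h := hu (S.circInv a)⁻¹ (S.circInv a)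
  rw [inv_mul_cancel, one_circ, circInv_circ, mul_one] at h
  exact mul_inv_eq_iff_eq_mul.mp h.symm

theorem IsUDistributive.innerAut_mul {a : A} (hu : S.IsUDistributive a) (b c : A) :
    S.innerAut a (b * c) = S.innerAut a b * S.innerAut a c := by
  set x := S.circ (S.circInv a) b
  set y := S.circ (S.circInv a) c
  calc S.innerAut a (b * c) = S.circ (x * (S.circInv a)⁻¹ * y) a := by
        rw [innerAut, brace]
    _ = S.circ x a * a⁻¹ * S.circ (S.circInv a)⁻¹ a * a⁻¹ * S.circ y a := by
        rw [hu, hu, mul_assoc (S.circ x a)]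
    _ = S.circ x a * S.circ y a := by
        rw [hu.inv_circInv_circ]
        group
    _ = S.innerAut a b * S.innerAut a c := rfl

theorem IsUDistributive.isAut_innerAut {a : A} (hu : S.IsUDistributive a) :
    S.IsAut (S.innerAut a) :=
  ⟨S.innerAut_bijective a, hu.innerAut_mul, S.innerAut_circ a⟩

end SkewBraceStruct

/-- If `a` is a u-distributive element of a skew brace, i.e.
`(b · c) ∘ a = (b ∘ a) · a⁻¹ · (c ∘ a)` for all `b, c`, and `a` is not central in
`(A, ∘)`, then `ι_a : b ↦ ā ∘ b ∘ a` is a non-identity element of `Aut(A)`; in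
particular `Aut(A)` is non-trivial. -/
theorem uDistributive_noncentral_aut_nontrivial {A : Type*} [Group A] (S : SkewBraceStruct A)
    (a : A) (hu : ∀ b c : A, S.circ (b * c) a = S.circ b a * a⁻¹ * S.circ c a)
    (hnc : ∃ b : A, S.circ a b ≠ S.circ b a) :
    (S.IsAut (fun b => S.circ (S.circ (S.circInv a) b) a) ∧
      (fun b => S.circ (S.circ (S.circInv a) b) a) ≠ id) ∧
    ∃ f : A → A, S.IsAut f ∧ f ≠ id := by
  have haut : S.IsAut (S.innerAut a) := (show S.IsUDistributive a from hu).isAut_innerAut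
  have hne : S.innerAut a ≠ id := by
    obtain ⟨b, hb⟩ := hnc
    exact fun h => hb ((S.innerAut_eq_id_iff a).mp h b)
  exact ⟨⟨haut, hne⟩, S.innerAut a, haut, hne⟩
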